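/- arXiv:1903.06775 — 13 statements merged into one kernel-verified Lean document; each statement's English description precedes it below -/
import Mathlib

section
/- Let ~ be a prelambda congruence, x a variable, and A a term independent of x in ~ (i.e., there exists a variable z ≠ x with [λx A]z ~ A). Then [λx A]D ~ A for every term D. -/
inductive Term (V : Type) : Type
  | var : V → Term V
  | app : Term V → Term V → Term V
  | lam : V → Term V → Term V

namespace Term

variable {V : Type}

/-- Structural conditions: `R` is an equivalence relation compatible with
abstraction and application. -/
def IsCongr (R : Term V → Term V → Prop) : Prop :=
  Equivalence R ∧
  (∀ (x : V) (A B : Term V), R A B → R (lam x A) (lam x B)) ∧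
  (∀ (A B C D : Term V), R A B → R C D → R (app A C) (app B D))

/-- Prelambda congruence: congruence satisfying the beta conditions (β1)–(β5). -/
def IsPrelambda (R : Term V → Term V → Prop) : Prop :=
  IsCongr R ∧
  (∀ (x : V) (D : Term V), R (app (lam x (var x)) D) D) ∧
  (∀ (x y : V) (D : Term V), x ≠ y → R (app (lam x (var y)) D) (var y)) ∧
  (∀ (x : V) (A B D : Term V),
    R (app (lam x (app A B)) D) (app (app (lam x A) D) (app (lam x B) D))) ∧
  (∀ (x : V) (A D : Term V), R (app (lam x (lam x A)) D) (lam x A)) ∧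
  (∀ (x y : V) (A D : Term V), x ≠ y → R (app (lam y D) (var x)) D →
    R (app (lam x (lam y A)) D) (lam y (app (lam x A) D)))

/-- The set of variables of which `A` is independent in `R`. -/
def ind (R : Term V → Term V → Prop) (A : Term V) : Set V :=
  {x | ∃ z : V, x ≠ z ∧ R (app (lam x A) (var z)) A}

/-- The set of variables not occurring free in a term. -/
def nonFree : Term V → Set V
  | var x => {x}ᶜ
  | app B C => nonFree B ∩ nonFree C
  | lam x B => nonFree B ∪ {x}

/-- The set of variables not occurring bound in a term. -/
def nonBound : Term V → Set V
  | var _ => Set.univ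
  | app B C => nonBound B ∩ nonBound C
  | lam x B => nonBound B \ {x}

/-- Substitution `⟨D/x⟩(A)` (Barendregt's dissertation style). -/
def subst [DecidableEq V] (D : Term V) (x : V) : Term V → Term V
  | var y => if x = y then D else var y
  | app B C => app (subst D x B) (subst D x C)
  | lam y B => if x = y then lam y B else lam y (subst D x B)

/-- Lambda congruence: prelambda congruence satisfying (αe). -/
def IsLambdaCongr (R : Term V → Term V → Prop) : Prop :=
  IsPrelambda R ∧
  (∀ (x y : V) (A : Term V), R (app (lam y A) (var x)) A →
    R (lam x A) (lam y (app (lam x A) (var y))))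

/-- Extensional congruence: prelambda congruence satisfying (ηe). -/
def IsExtCongr (R : Term V → Term V → Prop) : Prop :=
  IsPrelambda R ∧
  (∀ x y : V, x ≠ y → R (var y) (lam x (app (var y) (var x))))

/-- Lambda theory: congruence satisfying (β) and (α). -/
def IsLambdaTheory [DecidableEq V] (R : Term V → Term V → Prop) : Prop :=
  IsCongr R ∧
  (∀ (x : V) (A D : Term V), nonBound A ∪ nonFree D = Set.univ →
    R (app (lam x A) D) (subst D x A)) ∧
  (∀ (x y : V) (A : Term V), y ∈ nonFree A ∩ nonBound A →
    R (lam x A) (lam y (subst (var y) x A)))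

end Term

open Term
theorem stmt0 {V : Type} [Infinite V] [DecidableEq V]
    (R : Term V → Term V → Prop) (hR : IsPrelambda R)
    (x : V) (A : Term V) (hx : x ∈ ind R A) :
    ∀ D : Term V, R (Term.app (Term.lam x A) D) A := by
  obtain ⟨⟨heq, hlam, happ⟩, hβ1, hβ2, hβ3, hβ4, hβ5⟩ := hR
  obtain ⟨z, hxz, h⟩ := hx
  intro D
  -- (λx A) D ~ (λx ((λx A) z)) D
  have s1 : R (Term.app (Term.lam x A) D)
      (Term.app (Term.lam x (Term.app (Term.lam x A) (Term.var z))) D) :=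
    happ _ _ _ _ (hlam _ _ _ (heq.symm h)) (heq.refl D)
  -- β3
  have s2 := hβ3 x (Term.lam x A) (Term.var z) D
  -- β4 and β2
  have s3 : R (Term.app (Term.app (Term.lam x (Term.lam x A)) D)
        (Term.app (Term.lam x (Term.var z)) D))
      (Term.app (Term.lam x A) (Term.var z)) :=
    happ _ _ _ _ (hβ4 x A D) (hβ2 x z D hxz)
  exact heq.trans s1 (heq.trans s2 (heq.trans s3 h))
end

section
/- Let ~ be a prelambda congruence, x a variable, and B a term. Then ind(B) ∪ {x} ⊆ ind(λx B): the abstraction λx B is independent of x, and of every variable of which B is independent. -/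
open Term in
lemma ind_all {V : Type} (R : Term V → Term V → Prop) (hR : IsPrelambda R)
    {y z : V} {B : Term V} (hyz : y ≠ z)
    (h : R (app (lam y B) (var z)) B) (z' : V) :
    R (app (lam y B) (var z')) B := by
  obtain ⟨⟨heq, hlam, happ⟩, b1, b2, b3, b4, b5⟩ := hR
  -- app (lam y B) (var z') ~ app (lam y (app (lam y B) (var z))) (var z')
  have h1 : R (app (lam y B) (var z'))
      (app (lam y (app (lam y B) (var z))) (var z')) :=
    happ _ _ _ _ (hlam _ _ _ (heq.symm h)) (heq.refl _)
  have h2 : R (app (lam y (app (lam y B) (var z))) (var z'))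
      (app (app (lam y (lam y B)) (var z')) (app (lam y (var z)) (var z'))) :=
    b3 _ _ _ _
  have h3 : R (app (app (lam y (lam y B)) (var z')) (app (lam y (var z)) (var z')))
      (app (lam y B) (var z)) :=
    happ _ _ _ _ (b4 _ _ _) (b2 _ _ _ hyz)
  exact heq.trans (heq.trans (heq.trans h1 h2) h3) h

open Term
theorem stmt3 {V : Type} [Infinite V] [DecidableEq V]
    (R : Term V → Term V → Prop) (hR : IsPrelambda R)
    (x : V) (B : Term V) :
    ind R B ∪ {x} ⊆ ind R (Term.lam x B) := by
  obtain ⟨⟨heq, hlam, happ⟩, b1, b2, b3, b4, b5⟩ := hR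
  intro y hy
  rcases hy with hy | hy
  · by_cases hyx : y = x
    · subst hyx
      obtain ⟨w, hw⟩ := Infinite.exists_notMem_finset ({y} : Finset V)
      simp only [Finset.mem_singleton] at hw
      exact ⟨w, fun h => hw h.symm, b4 _ _ _⟩
    · obtain ⟨z, hyz, hz⟩ := hy
      obtain ⟨w, hw⟩ := Infinite.exists_notMem_finset ({x, y} : Finset V)
      simp only [Finset.mem_insert, Finset.mem_singleton, not_or] at hw
      refine ⟨w, fun h => hw.2 h.symm, ?_⟩
      have h5 : R (app (lam y (lam x B)) (var w)) (lam x (app (lam y B) (var w))) :=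
        b5 y x B (var w) hyx (b2 _ _ _ (fun h => hw.1 h.symm))
      have h6 : R (lam x (app (lam y B) (var w))) (lam x B) :=
        hlam _ _ _ (ind_all R ⟨⟨heq, hlam, happ⟩, b1, b2, b3, b4, b5⟩ hyz hz w)
      exact heq.trans h5 h6
  · rcases hy with rfl
    obtain ⟨w, hw⟩ := Infinite.exists_notMem_finset ({y} : Finset V)
    simp only [Finset.mem_singleton] at hw
    exact ⟨w, fun h => hw h.symm, b4 _ _ _⟩
end

section
/- Let ~ be a prelambda congruence and A a term. Then every variable not occurring free in A is in ind(A), i.e., F̄(A) ⊆ ind(A), where F̄(A) is the set of variables not occurring free in A. -/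
open Term

/-- All variables (free or bound) of a term, as a Finset. -/
def Term.varsF {V : Type} [DecidableEq V] : Term V → Finset V
  | Term.var x => {x}
  | Term.app B C => Term.varsF B ∪ Term.varsF C
  | Term.lam x B => Term.varsF B ∪ {x}

lemma key {V : Type} [DecidableEq V]
    (R : Term V → Term V → Prop) (hR : IsPrelambda R) :
    ∀ (A : Term V) (x z : V), x ∈ nonFree A → z ∉ Term.varsF A → z ≠ x →
      R (app (lam x A) (var z)) A := by
  obtain ⟨⟨⟨hrefl, hsymm, htrans⟩, hlam, happ⟩, hb1, hb2, hb3, hb4, hb5⟩ := hR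
  intro A
  induction A with
  | var y =>
    intro x z hx _ _
    exact hb2 x y (var z) hx
  | app B C ihB ihC =>
    intro x z hx hz hzx
    have hzB : z ∉ Term.varsF B := fun h => hz (Finset.mem_union_left _ h)
    have hzC : z ∉ Term.varsF C := fun h => hz (Finset.mem_union_right _ h)
    exact htrans (hb3 x B C (var z))
      (happ _ _ _ _ (ihB x z hx.1 hzB hzx) (ihC x z hx.2 hzC hzx))
  | lam y B ihB =>
    intro x z hx hz hzx
    by_cases hxy : x = y
    · subst hxy; exact hb4 x B (var z)
    · have hxB : x ∈ nonFree B := by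
        rcases hx with h | h
        · exact h
        · exact absurd h hxy
      have hzB : z ∉ Term.varsF B := fun h => hz (Finset.mem_union_left _ h)
      have hzy : z ≠ y := fun h => hz (by simp [Term.varsF, h])
      have h2 : R (app (lam y (var z)) (var x)) (var z) :=
        hb2 y z (var x) (Ne.symm hzy)
      exact htrans (hb5 x y B (var z) hxy h2)
        (hlam y _ _ (ihB x z hxB hzB hzx))


theorem stmt4 {V : Type} [Infinite V] [DecidableEq V]
    (R : Term V → Term V → Prop) (hR : IsPrelambda R)
    (A : Term V) :
    nonFree A ⊆ ind R A := by
  intro x hx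
  obtain ⟨z, hz⟩ := Infinite.exists_notMem_finset (Term.varsF A ∪ {x})
  have hzA : z ∉ Term.varsF A := fun h => hz (Finset.mem_union_left _ h)
  have hzx : z ≠ x := fun h => hz (by simp [h])
  exact ⟨z, hzx.symm, key R hR A x z hx hzA hzx⟩
end

section
/- Let ~ be a prelambda congruence, A and D terms, x and y variables with x ≠ y. If y does not occur free in D, then [λx (λy A)]D ~ λy ([λx A]D). -/
open Term

/-- Witness transfer: if `[λx A]z ~ A` for some `z ≠ x`, then `[λx A]w ~ A` for all `w`. -/
theorem transfer_lemma {V : Type} [DecidableEq V]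
    (R : Term V → Term V → Prop) (hR : IsPrelambda R) (x z : V) (A : Term V)
    (hxz : x ≠ z) (h : R (Term.app (Term.lam x A) (Term.var z)) A) (w : V) :
    R (Term.app (Term.lam x A) (Term.var w)) A := by
  obtain ⟨⟨heq, hlam, happ⟩, b1, b2, b3, b4, b5⟩ := hR
  -- A ~ (λx A) z, so λx A ~ λx ((λx A) z)
  have h1 : R (Term.lam x A) (Term.lam x (Term.app (Term.lam x A) (Term.var z))) :=
    hlam x _ _ (heq.symm h)
  have h2 : R (Term.app (Term.lam x A) (Term.var w))
      (Term.app (Term.lam x (Term.app (Term.lam x A) (Term.var z))) (Term.var w)) :=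
    happ _ _ _ _ h1 (heq.refl _)
  have h3 := b3 x (Term.lam x A) (Term.var z) (Term.var w)
  have h4 : R (Term.app (Term.lam x (Term.lam x A)) (Term.var w)) (Term.lam x A) :=
    b4 x A (Term.var w)
  have h5 : R (Term.app (Term.lam x (Term.var z)) (Term.var w)) (Term.var z) :=
    b2 x z (Term.var w) hxz
  exact heq.trans h2 (heq.trans h3 (heq.trans (happ _ _ _ _ h4 h5) h))

theorem key_lemma {V : Type} [Infinite V] [DecidableEq V]
    (R : Term V → Term V → Prop) (hR : IsPrelambda R) (y : V) :
    ∀ (D : Term V) (w : V), y ∈ nonFree D → R (Term.app (Term.lam y D) (Term.var w)) D := by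
  obtain ⟨⟨heq, hlam, happ⟩, b1, b2, b3, b4, b5⟩ := hR
  intro D
  induction D with
  | var z =>
    intro w hy
    exact b2 y z (Term.var w) (by simpa [nonFree] using hy)
  | app B C ihB ihC =>
    intro w hy
    have hyB : y ∈ nonFree B := hy.1
    have hyC : y ∈ nonFree C := hy.2
    exact heq.trans (b3 y B C (Term.var w))
      (happ _ _ _ _ (ihB w hyB) (ihC w hyC))
  | lam z B ih =>
    intro w hy
    by_cases hyz : y = z
    · subst hyz; exact b4 y B (Term.var w)
    · have hyB : y ∈ nonFree B := by
        rcases hy with h | h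
        · exact h
        · exact absurd h hyz
      -- pick a fresh variable u ∉ {y, z}
      obtain ⟨u, hu⟩ := Infinite.exists_notMem_finset ({y, z} : Finset V)
      simp only [Finset.mem_insert, Finset.mem_singleton, not_or] at hu
      have huy : u ≠ y := hu.1
      have huz : u ≠ z := hu.2
      have hcond : R (Term.app (Term.lam z (Term.var u)) (Term.var y)) (Term.var u) :=
        b2 z u (Term.var y) (Ne.symm huz)
      have hu0 : R (Term.app (Term.lam y (Term.lam z B)) (Term.var u)) (Term.lam z B) :=
        heq.trans (b5 y z B (Term.var u) hyz hcond) (hlam z _ _ (ih u hyB))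
      exact transfer_lemma R ⟨⟨heq, hlam, happ⟩, b1, b2, b3, b4, b5⟩ y u _
        (Ne.symm huy) hu0 w

theorem stmt5 {V : Type} [Infinite V] [DecidableEq V]
    (R : Term V → Term V → Prop) (hR : IsPrelambda R)
    (A D : Term V) (x y : V) (hxy : x ≠ y) (hD : y ∈ nonFree D) :
    R (Term.app (Term.lam x (Term.lam y A)) D)
      (Term.lam y (Term.app (Term.lam x A) D)) := by
  have h := key_lemma R hR y D x hD
  exact hR.2.2.2.2.2 x y A D hxy h
end

section
/- Let ~ be a prelambda congruence and A a term. Then ind(A) equals the set of variables v such that v does not occur free in some term B with B ~ A. -/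
open Term

/-- All variables occurring in a term, as a finset. -/
def allVars {V : Type} [DecidableEq V] : Term V → Finset V
  | .var x => {x}
  | .app B C => allVars B ∪ allVars C
  | .lam x B => insert x (allVars B)

lemma key_lemma_s6 {V : Type} [DecidableEq V]
    (R : Term V → Term V → Prop) (hR : IsPrelambda R) :
    ∀ (B : Term V) (x z : V), x ∈ nonFree B → z ∉ allVars B → x ≠ z →
      R (app (lam x B) (var z)) B := by
  obtain ⟨⟨hequiv, hlam, happ⟩, hb1, hb2, hb3, hb4, hb5⟩ := id hR
  intro B
  induction B with
  | var y =>
    intro x z hx _ _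
    exact hb2 x y (var z) (by simpa [nonFree] using hx)
  | app B C ihB ihC =>
    intro x z hx hz hxz
    simp only [nonFree, Set.mem_inter_iff] at hx
    simp only [allVars, Finset.mem_union, not_or] at hz
    exact hequiv.trans (hb3 x B C (var z))
      (happ _ _ _ _ (ihB x z hx.1 hz.1 hxz) (ihC x z hx.2 hz.2 hxz))
  | lam y B ih =>
    intro x z hx hz hxz
    simp only [allVars, Finset.mem_insert, not_or] at hz
    by_cases hxy : x = y
    · subst hxy; exact hb4 x B (var z)
    · have hxB : x ∈ nonFree B := by
        simp only [nonFree, Set.mem_union, Set.mem_singleton_iff] at hx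
        tauto
      have h5 := hb5 x y B (var z) hxy (hb2 y z (var x) (fun h => hz.1 h.symm))
      exact hequiv.trans h5 (hlam y _ _ (ih x z hxB hz.2 hxz))

theorem stmt6 {V : Type} [Infinite V] [DecidableEq V]
    (R : Term V → Term V → Prop) (hR : IsPrelambda R)
    (A : Term V) :
    ind R A = {v : V | ∃ B : Term V, v ∈ nonFree B ∧ R B A} := by
  obtain ⟨⟨hequiv, hlam, happ⟩, -⟩ := id hR
  ext v
  constructor
  · rintro ⟨z, hvz, hRz⟩
    refine ⟨app (lam v A) (var z), ?_, hRz⟩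
    simp only [nonFree, Set.mem_inter_iff, Set.mem_union, Set.mem_singleton_iff,
      Set.mem_compl_iff]
    exact ⟨Or.inr trivial, hvz⟩
  · rintro ⟨B, hvB, hBA⟩
    obtain ⟨z, hz⟩ := (insert v (allVars B)).exists_notMem
    simp only [Finset.mem_insert, not_or] at hz
    refine ⟨z, fun h => hz.1 h.symm, ?_⟩
    have h1 : R (app (lam v B) (var z)) B :=
      key_lemma_s6 R hR B v z hvB hz.2 (fun h => hz.1 h.symm)
    have h2 : R (app (lam v A) (var z)) (app (lam v B) (var z)) :=
      happ _ _ _ _ (hlam v A B (hequiv.symm hBA)) (hequiv.refl _)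
    exact hequiv.trans h2 (hequiv.trans h1 hBA)
end

section
/- There exists a term A such that in every prelambda congruence ~, ind(A) is not a subset of F̄(A). Concretely, for distinct variables x and y, the term A = [λx y]x satisfies x ∈ ind(A) but x ∉ F̄(A) in every prelambda congruence. -/
open Term
theorem key_s7 {V : Type} [DecidableEq V] (x y : V) (hxy : x ≠ y)
    (R : Term V → Term V → Prop) (hR : IsPrelambda R) :
    x ∈ ind R (Term.app (Term.lam x (Term.var y)) (Term.var x)) ∧
    x ∉ nonFree (Term.app (Term.lam x (Term.var y)) (Term.var x)) := by
  obtain ⟨⟨heq, hlam, happ⟩, b1, b2, b3, b4, b5⟩ := hR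
  constructor
  · refine ⟨y, hxy, ?_⟩
    set A : Term V := Term.app (Term.lam x (Term.var y)) (Term.var x) with hA
    have h1 : R (app (lam x A) (var y))
        (app (app (lam x (lam x (var y))) (var y)) (app (lam x (var x)) (var y))) := b3 ..
    have h2 : R (app (lam x (lam x (var y))) (var y)) (lam x (var y)) := b4 ..
    have h3 : R (app (lam x (var x)) (var y)) (var y) := b1 ..
    have h4 : R (app (lam x A) (var y)) (app (lam x (var y)) (var y)) :=
      heq.trans h1 (happ _ _ _ _ h2 h3)
    have h5 : R (app (lam x A) (var y)) (var y) := heq.trans h4 (b2 _ _ _ hxy)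
    have h6 : R A (var y) := b2 _ _ _ hxy
    exact heq.trans h5 (heq.symm h6)
  · intro h
    simp [nonFree] at h

theorem stmt7 {V : Type} [Infinite V] [DecidableEq V] :
    (∃ A : Term V, ∀ R : Term V → Term V → Prop, IsPrelambda R →
      ¬ ind R A ⊆ nonFree A) ∧
    (∀ x y : V, x ≠ y → ∀ R : Term V → Term V → Prop, IsPrelambda R →
      x ∈ ind R (Term.app (Term.lam x (Term.var y)) (Term.var x)) ∧
      x ∉ nonFree (Term.app (Term.lam x (Term.var y)) (Term.var x))) := by
  constructor
  · obtain ⟨x, y, hxy⟩ := exists_pair_ne V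
    refine ⟨Term.app (Term.lam x (Term.var y)) (Term.var x), fun R hR hsub => ?_⟩
    exact (key_s7 x y hxy R hR).2 (hsub (key_s7 x y hxy R hR).1)
  · exact fun x y hxy R hR => key_s7 x y hxy R hR
end

section
/- Let ~ be a lambda congruence, A a term, and x, y variables with y ∈ ind(A). Then λx A ~ λy ([λx A]y). -/
open Term
theorem stmt9 {V : Type} [Infinite V] [DecidableEq V]
    (R : Term V → Term V → Prop) (hR : IsLambdaCongr R)
    (A : Term V) (x y : V) (hy : y ∈ ind R A) :
    R (Term.lam x A) (Term.lam y (Term.app (Term.lam x A) (Term.var y))) := by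
  obtain ⟨⟨⟨equiv, lamc, appc⟩, b1, b2, b3, b4, b5⟩, alpha⟩ := hR
  obtain ⟨z, hzy, hz⟩ := hy
  have key : R (app (lam y A) (var x)) A := by
    have h1 : R (lam y A) (lam y (app (lam y A) (var z))) :=
      lamc _ _ _ (equiv.symm hz)
    have h2 : R (app (lam y A) (var x))
        (app (lam y (app (lam y A) (var z))) (var x)) :=
      appc _ _ _ _ h1 (equiv.refl _)
    have h3 : R (app (lam y (app (lam y A) (var z))) (var x))
        (app (app (lam y (lam y A)) (var x)) (app (lam y (var z)) (var x))) :=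
      b3 y (lam y A) (var z) (var x)
    have h4 : R (app (lam y (lam y A)) (var x)) (lam y A) := b4 y A (var x)
    have h5 : R (app (lam y (var z)) (var x)) (var z) := b2 y z (var x) hzy
    exact equiv.trans (equiv.trans h2 (equiv.trans h3 (appc _ _ _ _ h4 h5))) hz
  exact alpha x y A key
end

section
/- Let ~ be an extensional congruence, A a term, and y a variable with y ∈ ind(A). Then A ~ λy (A y). -/
open Term
theorem stmt11 {V : Type} [Infinite V] [DecidableEq V]
    (R : Term V → Term V → Prop) (hR : IsExtCongr R)
    (A : Term V) (y : V) (hy : y ∈ ind R A) :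
    R A (Term.lam y (Term.app A (Term.var y))) := by
  obtain ⟨⟨⟨⟨hrefl, hsymm, htrans⟩, hlam, happ⟩, hb1, hb2, hb3, hb4, hb5⟩, heta⟩ := hR
  obtain ⟨z, hzy, hz⟩ := hy
  -- A ~ (λz z) A
  have h1 : R A (app (lam z (var z)) A) := hsymm (hb1 z A)
  -- (λz z) A ~ (λz (λy (z y))) A
  have h2 : R (app (lam z (var z)) A) (app (lam z (lam y (app (var z) (var y)))) A) :=
    happ _ _ _ _ (hlam z _ _ (heta y z hzy)) (hrefl A)
  -- (λz (λy (z y))) A ~ λy ((λz (z y)) A)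
  have h3 : R (app (lam z (lam y (app (var z) (var y)))) A)
      (lam y (app (lam z (app (var z) (var y))) A)) := hb5 z y _ A hzy.symm hz
  -- (λz (z y)) A ~ A y
  have h4 : R (app (lam z (app (var z) (var y))) A) (app A (var y)) := by
    refine htrans (hb3 z (var z) (var y) A) ?_
    exact happ _ _ _ _ (hb1 z A) (hb2 z y A hzy.symm)
  exact htrans h1 (htrans h2 (htrans h3 (hlam y _ _ h4)))
end

section
/- Every extensional congruence is a lambda congruence: any prelambda congruence satisfying (ηe) (y ~ λx (y x) whenever x ≠ y) also satisfies (αe) (if [λy A]x ~ A then λx A ~ λy ([λx A]y)). -/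
open Term
theorem stmt12 {V : Type} [Infinite V] [DecidableEq V]
    (R : Term V → Term V → Prop) (hR : IsExtCongr R) :
    IsLambdaCongr R := by
  obtain ⟨hP, heta⟩ := hR
  obtain ⟨⟨⟨hrefl, hsymm, htrans⟩, hlam, happ⟩, b1, b2, b3, b4, b5⟩ := id hP
  -- generalized eta: if M is y-independent (witness w), then M ~ λy (M y)
  have etaGen : ∀ (y w : V) (M : Term V), y ≠ w →
      R (app (lam y M) (var w)) M → R M (lam y (app M (var y))) := by
    intro y w M hyw hind
    have h1 : R M (app (lam w (var w)) M) := hsymm (b1 w M)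
    have h2 : R (app (lam w (var w)) M) (app (lam w (lam y (app (var w) (var y)))) M) :=
      happ _ _ _ _ (hlam w _ _ (heta y w hyw)) (hrefl M)
    have h3 : R (app (lam w (lam y (app (var w) (var y)))) M)
        (lam y (app (lam w (app (var w) (var y))) M)) :=
      b5 w y _ M hyw.symm hind
    have h4 : R (app (lam w (app (var w) (var y))) M)
        (app (app (lam w (var w)) M) (app (lam w (var y)) M)) := b3 w _ _ M
    have h5 : R (app (app (lam w (var w)) M) (app (lam w (var y)) M)) (app M (var y)) :=
      happ _ _ _ _ (b1 w M) (b2 w y M hyw.symm)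
    exact htrans h1 (htrans h2 (htrans h3 (hlam y _ _ (htrans h4 h5))))
  -- witness transfer: independence for one witness gives it for all
  have indAll : ∀ (x y : V) (A : Term V), x ≠ y →
      R (app (lam y A) (var x)) A → ∀ w : V, R (app (lam y A) (var w)) A := by
    intro x y A hxy hA w
    have h1 : R (app (lam y A) (var w)) (app (lam y (app (lam y A) (var x))) (var w)) :=
      happ _ _ _ _ (hlam y _ _ (hsymm hA)) (hrefl (var w))
    have h2 : R (app (lam y (app (lam y A) (var x))) (var w))
        (app (app (lam y (lam y A)) (var w)) (app (lam y (var x)) (var w))) :=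
      b3 y _ _ (var w)
    have h3 : R (app (app (lam y (lam y A)) (var w)) (app (lam y (var x)) (var w)))
        (app (lam y A) (var x)) :=
      happ _ _ _ _ (b4 y A (var w)) (b2 y x (var w) (Ne.symm hxy))
    exact htrans h1 (htrans h2 (htrans h3 hA))
  refine ⟨hP, ?_⟩
  intro x y A H
  obtain ⟨w, hw⟩ := Infinite.exists_notMem_finset ({x, y} : Finset V)
  simp only [Finset.mem_insert, Finset.mem_singleton, not_or] at hw
  obtain ⟨hwx, hwy⟩ := hw
  have hcond : R (app (lam y (lam x A)) (var w)) (lam x A) := by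
    by_cases hxy : x = y
    · subst hxy; exact b4 x A (var w)
    · have h1 : R (app (lam y (lam x A)) (var w)) (lam x (app (lam y A) (var w))) :=
        b5 y x A (var w) (Ne.symm hxy) (b2 x w (var y) (fun h => hwx h.symm))
      have h2 : R (app (lam y A) (var w)) A := indAll x y A hxy H w
      exact htrans h1 (hlam x _ _ h2)
  exact etaGen y w (lam x A) (fun h => hwy h.symm) hcond
end

section
/- A prelambda congruence ~ is an extensional congruence if and only if it satisfies extensionality for terms: for all terms A, B, if A D ~ B D for every term D, then A ~ B. -/
namespace Term

variable {V : Type}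

/-- All variables (free or bound) occurring in a term, as a Finset. -/
def varsF_s13 [DecidableEq V] : Term V → Finset V
  | var x => {x}
  | app A B => varsF_s13 A ∪ varsF_s13 B
  | lam x A => insert x (varsF_s13 A)

lemma fresh_lemma [DecidableEq V] (R : Term V → Term V → Prop) (hR : IsPrelambda R) :
    ∀ (A : Term V) (x z : V), x ∉ varsF_s13 A → z ∉ varsF_s13 A → x ≠ z →
      R (app (lam x A) (var z)) A := by
  obtain ⟨⟨heq, hlam, happ⟩, b1, b2, b3, b4, b5⟩ := hR
  intro A
  induction A with
  | var v =>
    intro x z hx _ _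
    simp [varsF_s13] at hx
    exact b2 x v (var z) hx
  | app B C ihB ihC =>
    intro x z hx hz hxz
    simp [varsF_s13] at hx hz
    exact heq.trans (b3 x B C (var z))
      (happ _ _ _ _ (ihB x z hx.1 hz.1 hxz) (ihC x z hx.2 hz.2 hxz))
  | lam w B ih =>
    intro x z hx hz hxz
    simp [varsF_s13] at hx hz
    have hxw : x ≠ w := hx.1
    have hzw : w ≠ z := fun h => hz.1 h.symm
    have hcond : R (app (lam w (var z)) (var x)) (var z) := b2 w z (var x) hzw
    exact heq.trans (b5 x w B (var z) hxw hcond)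
      (hlam w _ _ (ih x z hx.2 hz.2 hxz))

end Term

open Term
theorem stmt13 {V : Type} [Infinite V] [DecidableEq V]
    (R : Term V → Term V → Prop) (hR : IsPrelambda R) :
    IsExtCongr R ↔
      (∀ A B : Term V,
        (∀ D : Term V, R (Term.app A D) (Term.app B D)) → R A B) := by
  obtain ⟨⟨heq, hlam, happ⟩, b1, b2, b3, b4, b5⟩ := hR
  constructor
  · rintro ⟨_, heta⟩ A B H
    obtain ⟨x, hx⟩ := Infinite.exists_notMem_finset (varsF_s13 A ∪ varsF_s13 B)
    obtain ⟨y, hy⟩ := Infinite.exists_notMem_finset (insert x (varsF_s13 A ∪ varsF_s13 B))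
    simp at hx hy
    have hxy : x ≠ y := fun h => hy.1 h.symm
    have key : ∀ C : Term V, x ∉ varsF_s13 C → y ∉ varsF_s13 C →
        R C (lam x (app C (var x))) := by
      intro C hxC hyC
      -- C ~ (λy.y) C
      have s1 : R C (app (lam y (var y)) C) := heq.symm (b1 y C)
      -- (λy.y) C ~ (λy.λx.(y x)) C
      have s2 : R (app (lam y (var y)) C) (app (lam y (lam x (app (var y) (var x)))) C) :=
        happ _ _ _ _ (hlam y _ _ (heta x y hxy)) (heq.refl C)
      -- β5 step
      have hcond : R (app (lam x C) (var y)) C :=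
        fresh_lemma R ⟨⟨heq, hlam, happ⟩, b1, b2, b3, b4, b5⟩ C x y hxC hyC hxy
      have s3 : R (app (lam y (lam x (app (var y) (var x)))) C)
          (lam x (app (lam y (app (var y) (var x))) C)) :=
        b5 y x (app (var y) (var x)) C hxy.symm hcond
      -- inside: (λy.(y x)) C ~ C x
      have s4 : R (app (lam y (app (var y) (var x))) C)
          (app (app (lam y (var y)) C) (app (lam y (var x)) C)) := b3 y _ _ C
      have s5 : R (app (app (lam y (var y)) C) (app (lam y (var x)) C)) (app C (var x)) :=
        happ _ _ _ _ (b1 y C) (b2 y x C hxy.symm)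
      have s6 : R (lam x (app (lam y (app (var y) (var x))) C)) (lam x (app C (var x))) :=
        hlam x _ _ (heq.trans s4 s5)
      exact heq.trans s1 (heq.trans s2 (heq.trans s3 s6))
    have kA := key A hx.1 hy.2.1
    have kB := key B hx.2 hy.2.2
    have mid : R (lam x (app A (var x))) (lam x (app B (var x))) :=
      hlam x _ _ (H (var x))
    exact heq.trans kA (heq.trans mid (heq.symm kB))
  · intro hext
    refine ⟨⟨⟨heq, hlam, happ⟩, b1, b2, b3, b4, b5⟩, ?_⟩
    intro x y hxy
    apply hext
    intro D
    have s1 : R (app (lam x (app (var y) (var x))) D)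
        (app (app (lam x (var y)) D) (app (lam x (var x)) D)) := b3 x _ _ D
    have s2 : R (app (app (lam x (var y)) D) (app (lam x (var x)) D)) (app (var y) D) :=
      happ _ _ _ _ (b2 x y D hxy) (b1 x D)
    exact heq.symm (heq.trans s1 s2)
end

section
/- Let ~ be a prelambda congruence, x a variable, and A, D terms such that B̄(A) ∪ F̄(D) equals the whole set of variables (no variable bound in A occurs free in D). Then [λx A]D ~ ⟨D/x⟩(A). -/
open Term

/-- Finset of bound variables. -/
def bvF {V : Type} [DecidableEq V] : Term V → Finset V
  | Term.var _ => ∅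
  | Term.app B C => bvF B ∪ bvF C
  | Term.lam y B => insert y (bvF B)

lemma mem_nonBound_of_not_mem_bvF {V : Type} [DecidableEq V] {z : V} :
    ∀ {D : Term V}, z ∉ bvF D → z ∈ nonBound D
  | Term.var _, _ => trivial
  | Term.app B C, h => by
      simp only [bvF, Finset.mem_union] at h
      push_neg at h
      exact ⟨mem_nonBound_of_not_mem_bvF h.1, mem_nonBound_of_not_mem_bvF h.2⟩
  | Term.lam y B, h => by
      simp only [bvF, Finset.mem_insert] at h
      push_neg at h
      exact ⟨mem_nonBound_of_not_mem_bvF h.2, h.1⟩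

/-- If `z ≠ y`, `z` is not bound in `D`, and `y` is not free in `D`,
then `(λy D) z ~ D`. -/
lemma lem_fresh {V : Type} {R : Term V → Term V → Prop} (hR : IsPrelambda R) :
    ∀ (D : Term V) (y z : V), z ≠ y → z ∈ nonBound D → y ∈ nonFree D →
      R (Term.app (Term.lam y D) (Term.var z)) D
  | Term.var w, y, z, _, _, hy =>
      hR.2.2.1 y w (Term.var z) (fun h => hy (Set.mem_singleton_iff.mpr h))
  | Term.app B C, y, z, hzy, hzb, hy => by
      obtain ⟨hzb1, hzb2⟩ := hzb
      obtain ⟨hy1, hy2⟩ := hy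
      have h3 := hR.2.2.2.1 y B C (Term.var z)
      have hB := lem_fresh hR B y z hzy hzb1 hy1
      have hC := lem_fresh hR C y z hzy hzb2 hy2
      exact hR.1.1.trans h3 (hR.1.2.2 _ _ _ _ hB hC)
  | Term.lam w B, y, z, hzy, hzb, hy => by
      obtain ⟨hzb1, hzw⟩ := hzb
      by_cases hyw : y = w
      · subst hyw
        exact hR.2.2.2.2.1 y B (Term.var z)
      · have hyB : y ∈ nonFree B := by
          cases hy with
          | inl h => exact h
          | inr h => exact absurd h hyw
        have hcond : R (Term.app (Term.lam w (Term.var z)) (Term.var y)) (Term.var z) :=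
          hR.2.2.1 w z (Term.var y) (fun h => hzw h.symm)
        have h5 := hR.2.2.2.2.2 y w B (Term.var z) hyw hcond
        have hB := lem_fresh hR B y z hzy hzb1 hyB
        exact hR.1.1.trans h5 (hR.1.2.1 w _ _ hB)

/-- If `(λy D) z ~ D` for some `z ≠ y`, then `(λy D) E ~ D` for all `E`. -/
lemma lem_all {V : Type} {R : Term V → Term V → Prop} (hR : IsPrelambda R)
    {D : Term V} {y z : V} (hzy : z ≠ y)
    (h1 : R (Term.app (Term.lam y D) (Term.var z)) D) (E : Term V) :
    R (Term.app (Term.lam y D) E) D := by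
  have e := hR.1.1
  -- λy D ~ λy ((λy D) z)
  have s1 : R (Term.lam y D) (Term.lam y (Term.app (Term.lam y D) (Term.var z))) :=
    hR.1.2.1 y _ _ (e.symm h1)
  -- (λy D) E ~ (λy ((λy D) z)) E
  have s2 : R (Term.app (Term.lam y D) E)
      (Term.app (Term.lam y (Term.app (Term.lam y D) (Term.var z))) E) :=
    hR.1.2.2 _ _ _ _ s1 (e.refl E)
  -- β3
  have s3 := hR.2.2.2.1 y (Term.lam y D) (Term.var z) E
  -- β4 : (λy (λy D)) E ~ λy D
  have s4 := hR.2.2.2.2.1 y D E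
  -- β2 : (λy z) E ~ z  (y ≠ z)
  have s5 := hR.2.2.1 y z E (fun h => hzy h.symm)
  have s6 : R (Term.app (Term.app (Term.lam y (Term.lam y D)) E)
      (Term.app (Term.lam y (Term.var z)) E)) (Term.app (Term.lam y D) (Term.var z)) :=
    hR.1.2.2 _ _ _ _ s4 s5
  exact e.trans s2 (e.trans s3 (e.trans s6 h1))

/-- If `y` is not free in `D`, then `(λy D) E ~ D` for all `E`. -/
lemma lem_nonFree {V : Type} [Infinite V] [DecidableEq V]
    {R : Term V → Term V → Prop} (hR : IsPrelambda R)
    {D : Term V} {y : V} (hy : y ∈ nonFree D) (E : Term V) :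
    R (Term.app (Term.lam y D) E) D := by
  obtain ⟨z, hz⟩ := Infinite.exists_notMem_finset (insert y (bvF D))
  simp only [Finset.mem_insert] at hz
  push_neg at hz
  exact lem_all hR hz.1 (lem_fresh hR D y z hz.1 (mem_nonBound_of_not_mem_bvF hz.2) hy) E

theorem stmt16 {V : Type} [Infinite V] [DecidableEq V]
    (R : Term V → Term V → Prop) (hR : IsPrelambda R)
    (x : V) (A D : Term V) (h : nonBound A ∪ nonFree D = Set.univ) :
    R (Term.app (Term.lam x A) D) (subst D x A) := by
  induction A generalizing x with
  | var y =>
      by_cases hxy : x = y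
      · subst hxy
        simp only [subst, if_pos rfl]
        exact hR.2.1 x D
      · simp only [subst, if_neg hxy]
        exact hR.2.2.1 x y D hxy
  | app B C ihB ihC =>
      have hB : nonBound B ∪ nonFree D = Set.univ := by
        rw [Set.eq_univ_iff_forall]
        intro v
        have := h ▸ Set.mem_univ v
        rcases (Set.eq_univ_iff_forall.mp h v) with hv | hv
        · exact Or.inl hv.1
        · exact Or.inr hv
      have hC : nonBound C ∪ nonFree D = Set.univ := by
        rw [Set.eq_univ_iff_forall]
        intro v
        rcases (Set.eq_univ_iff_forall.mp h v) with hv | hv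
        · exact Or.inl hv.2
        · exact Or.inr hv
      simp only [subst]
      have h3 := hR.2.2.2.1 x B C D
      exact hR.1.1.trans h3 (hR.1.2.2 _ _ _ _ (ihB x hB) (ihC x hC))
  | lam y B ihB =>
      by_cases hxy : x = y
      · subst hxy
        simp only [subst, if_pos rfl]
        exact hR.2.2.2.2.1 x B D
      · simp only [subst, if_neg hxy]
        have hyD : y ∈ nonFree D := by
          rcases (Set.eq_univ_iff_forall.mp h y) with hv | hv
          · exact absurd rfl hv.2
          · exact hv
        have hcond : R (Term.app (Term.lam y D) (Term.var x)) D :=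
          lem_nonFree hR hyD (Term.var x)
        have h5 := hR.2.2.2.2.2 x y B D hxy hcond
        have hB : nonBound B ∪ nonFree D = Set.univ := by
          rw [Set.eq_univ_iff_forall]
          intro v
          rcases (Set.eq_univ_iff_forall.mp h v) with hv | hv
          · exact Or.inl hv.1
          · exact Or.inr hv
        exact hR.1.1.trans h5 (hR.1.2.1 y _ _ (ihB x hB))
end

section
/- A binary relation on lambda terms is a lambda theory if and only if it is a lambda congruence. Consequently the traditional substitution-based axiomatization (structural conditions, (β), (α)) and the substitution-free axiomatization (structural conditions, (β1)–(β5), (αe)) define the same class of relations. -/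
set_option linter.unusedSectionVars false

namespace Term
section Aux
variable {V : Type} [DecidableEq V]

def size : Term V → ℕ
  | var _ => 1
  | app B C => size B + size C + 1
  | lam _ B => size B + 1

lemma subst_of_nonFree {x : V} {A : Term V} (D : Term V) (h : x ∈ nonFree A) :
    subst D x A = A := by
  induction A with
  | var y =>
    simp only [nonFree, Set.mem_compl_iff, Set.mem_singleton_iff] at h
    simp [subst, h]
  | app B C ihB ihC =>
    simp only [nonFree, Set.mem_inter_iff] at h
    simp [subst, ihB h.1, ihC h.2]
  | lam y B ih =>
    by_cases hxy : x = y
    · simp [subst, hxy]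
    · simp only [nonFree, Set.mem_union, Set.mem_singleton_iff] at h
      rcases h with h | h
      · simp [subst, hxy, ih h]
      · exact absurd h hxy

lemma nonFree_subst_self {x : V} {D : Term V} (h : x ∈ nonFree D) (A : Term V) :
    x ∈ nonFree (subst D x A) := by
  induction A with
  | var y =>
    by_cases hxy : x = y
    · simpa [subst, hxy] using h
    · simp [subst, hxy, nonFree, hxy]
  | app B C ihB ihC => simp [subst, nonFree]; exact ⟨ihB, ihC⟩
  | lam y B ih =>
    by_cases hxy : x = y
    · simp [subst, hxy, nonFree]
    · simp [subst, hxy, nonFree]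
      exact ih

lemma nonFree_subst_other {v x : V} {A D : Term V} (hA : v ∈ nonFree A)
    (hD : v ∈ nonFree D) : v ∈ nonFree (subst D x A) := by
  induction A with
  | var y =>
    by_cases hxy : x = y
    · simpa [subst, hxy] using hD
    · simpa [subst, hxy] using hA
  | app B C ihB ihC =>
    simp only [nonFree, Set.mem_inter_iff] at hA
    simp only [subst, nonFree, Set.mem_inter_iff]
    exact ⟨ihB hA.1, ihC hA.2⟩
  | lam y B ih =>
    by_cases hxy : x = y
    · simpa [subst, hxy] using hA
    · simp only [nonFree, Set.mem_union, Set.mem_singleton_iff] at hA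
      simp only [subst, hxy, if_false, nonFree, Set.mem_union, Set.mem_singleton_iff]
      rcases hA with h | h
      · exact Or.inl (ih h)
      · exact Or.inr h

lemma nonBound_subst {v x : V} {A D : Term V} (hA : v ∈ nonBound A)
    (hD : v ∈ nonBound D) : v ∈ nonBound (subst D x A) := by
  induction A with
  | var y =>
    by_cases hxy : x = y
    · simpa [subst, hxy] using hD
    · simp [subst, hxy, nonBound]
  | app B C ihB ihC =>
    simp only [nonBound, Set.mem_inter_iff] at hA
    exact ⟨ihB hA.1, ihC hA.2⟩
  | lam y B ih =>
    by_cases hxy : x = y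
    · simpa [subst, hxy] using hA
    · simp only [nonBound, Set.mem_diff, Set.mem_singleton_iff] at hA
      simp only [subst, hxy, if_false, nonBound, Set.mem_diff, Set.mem_singleton_iff]
      exact ⟨ih hA.1, hA.2⟩

lemma size_subst_var (w x : V) (A : Term V) : size (subst (var w) x A) = size A := by
  induction A with
  | var y => by_cases hxy : x = y <;> simp [subst, hxy, size]
  | app B C ihB ihC => simp [subst, size, ihB, ihC]
  | lam y B ih => by_cases hxy : x = y <;> simp [subst, hxy, size, ih]

lemma subst_var_self (x : V) (A : Term V) : subst (var x) x A = A := by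
  induction A with
  | var y => by_cases hxy : x = y <;> simp [subst, hxy]
  | app B C ihB ihC => simp [subst, ihB, ihC]
  | lam y B ih => by_cases hxy : x = y <;> simp [subst, hxy, ih]

lemma nonFree_compl_finite (A : Term V) : (nonFree A)ᶜ.Finite := by
  induction A with
  | var x => simp [nonFree]
  | app B C ihB ihC => simpa [nonFree, Set.compl_inter] using ihB.union ihC
  | lam x B ih =>
    refine ih.subset ?_
    intro v hv
    simp only [nonFree, Set.mem_compl_iff, Set.mem_union, Set.mem_singleton_iff,
      not_or] at hv ⊢
    exact hv.1

lemma nonBound_compl_finite (A : Term V) : (nonBound A)ᶜ.Finite := by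
  induction A with
  | var x => simp [nonBound]
  | app B C ihB ihC => simpa [nonBound, Set.compl_inter] using ihB.union ihC
  | lam x B ih =>
    refine (ih.union (Set.finite_singleton x)).subset ?_
    intro v hv
    simp only [nonBound, Set.mem_compl_iff, Set.mem_diff, Set.mem_singleton_iff,
      not_and, not_not] at hv
    by_cases h : v ∈ nonBound B
    · exact Or.inr (hv h)
    · exact Or.inl h

lemma exists_fresh [Infinite V] {s : Set V} (hs : s.Finite) : ∃ v, v ∉ s :=
  hs.infinite_compl.nonempty

lemma side_iff {A D : Term V} :
    nonBound A ∪ nonFree D = Set.univ ↔ ∀ v, v ∈ nonBound A ∨ v ∈ nonFree D := by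
  simp [Set.eq_univ_iff_forall, Set.mem_union]

end Aux

section Dir2
variable {V : Type} [DecidableEq V] {R : Term V → Term V → Prop}

/-- Lemma (S): β for variable substituents, from the prelambda axioms. -/
lemma lemS (h : IsPrelambda R) :
    ∀ (A : Term V) (x z : V), z ∈ nonBound A →
      R (app (lam x A) (var z)) (subst (var z) x A) := by
  obtain ⟨⟨hEq, hlam, happ⟩, hb1, hb2, hb3, hb4, hb5⟩ := h
  intro A
  induction A with
  | var w =>
    intro x z hz
    by_cases hxw : x = w
    · subst hxw; simpa [subst] using hb1 x (var z)
    · simpa [subst, hxw] using hb2 x w (var z) hxw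
  | app B C ihB ihC =>
    intro x z hz
    simp only [nonBound, Set.mem_inter_iff] at hz
    refine hEq.trans (hb3 x B C (var z)) ?_
    simpa [subst] using happ _ _ _ _ (ihB x z hz.1) (ihC x z hz.2)
  | lam w B ih =>
    intro x z hz
    simp only [nonBound, Set.mem_diff, Set.mem_singleton_iff] at hz
    by_cases hxw : x = w
    · subst hxw; simpa [subst] using hb4 x B (var z)
    · have hwz : w ≠ z := fun hh => hz.2 hh.symm
      have h5 := hb5 x w B (var z) hxw (hb2 w z (var x) hwz)
      refine hEq.trans h5 ?_
      have := hlam w _ _ (ih x z hz.1)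
      simpa [subst, hxw] using this

/-- Lemma (I): `[λy A]z ~ A` when `y` is not free in `A`. -/
lemma lemI [Infinite V] (h : IsLambdaCongr R) :
    ∀ (n : ℕ) (A : Term V), size A ≤ n → ∀ (y z : V), y ∈ nonFree A →
      R (app (lam y A) (var z)) A := by
  have hS := lemS h.1
  obtain ⟨⟨⟨hEq, hlam, happ⟩, hb1, hb2, hb3, hb4, hb5⟩, hae⟩ := h
  intro n
  induction n with
  | zero => intro A hA; cases A <;> simp [size] at hA
  | succ n ih =>
    intro A hA y z hy
    cases A with
    | var w =>
      have hyw : y ≠ w := by simpa [nonFree] using hy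
      exact hb2 y w (var z) hyw
    | app B C =>
      simp only [nonFree, Set.mem_inter_iff] at hy
      have hB : size B ≤ n := by simp only [size] at hA; omega
      have hC : size C ≤ n := by simp only [size] at hA; omega
      exact hEq.trans (hb3 y B C (var z))
        (happ _ _ _ _ (ih B hB y z hy.1) (ih C hC y z hy.2))
    | lam w B =>
      have hB : size B ≤ n := by simp only [size] at hA; omega
      by_cases hyw : y = w
      · subst hyw; exact hb4 y B (var z)
      · have hyB : y ∈ nonFree B := by
          simp only [nonFree, Set.mem_union, Set.mem_singleton_iff] at hy
          tauto
        by_cases hwz : w = z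
        · -- bad case: inner binder equals the substituted variable; rename it
          subst hwz
          obtain ⟨u, hu⟩ := exists_fresh
            (((nonFree_compl_finite B).union (nonBound_compl_finite B)).union
              ((Set.finite_singleton y).union (Set.finite_singleton w)))
          simp only [Set.mem_union, Set.mem_compl_iff, Set.mem_singleton_iff,
            not_or, not_not] at hu
          obtain ⟨⟨huF, huB⟩, huy, huw⟩ := hu
          have h1 : R (app (lam u B) (var w)) B := ih B hB u w huF
          have h2 : R (lam w B) (lam u (app (lam w B) (var u))) := hae w u B h1
          have h3 : R (app (lam w B) (var u)) (subst (var u) w B) := hS B w u huB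
          set B₂ := subst (var u) w B with hB₂
          have h4 : R (lam w B) (lam u B₂) := hEq.trans h2 (hlam u _ _ h3)
          have hsize : size B₂ ≤ n := by rw [hB₂, size_subst_var]; exact hB
          have hyB₂ : y ∈ nonFree B₂ := by
            refine nonFree_subst_other hyB ?_
            simp only [nonFree, Set.mem_compl_iff, Set.mem_singleton_iff]
            exact fun hh => huy hh.symm
          have hyu : y ≠ u := fun hh => huy hh.symm
          have h5 : R (app (lam y (lam u B₂)) (var w)) (lam u (app (lam y B₂) (var w))) :=
            hb5 y u B₂ (var w) hyu (hb2 u w (var y) huw)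
          have h6 : R (app (lam y B₂) (var w)) B₂ := ih B₂ hsize y w hyB₂
          have step1 : R (app (lam y (lam w B)) (var w)) (app (lam y (lam u B₂)) (var w)) :=
            happ _ _ _ _ (hlam y _ _ h4) (hEq.refl _)
          exact hEq.trans (hEq.trans (hEq.trans step1 h5) (hlam u _ _ h6)) (hEq.symm h4)
        · -- good case
          have h5 := hb5 y w B (var z) hyw (hb2 w z (var y) hwz)
          exact hEq.trans h5 (hlam w _ _ (ih B hB y z hyB))

/-- Full (β) from the lambda-congruence axioms. -/
lemma lemBeta [Infinite V] (h : IsLambdaCongr R) :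
    ∀ (x : V) (A D : Term V), nonBound A ∪ nonFree D = Set.univ →
      R (app (lam x A) D) (subst D x A) := by
  have hI := lemI h
  obtain ⟨⟨⟨hEq, hlam, happ⟩, hb1, hb2, hb3, hb4, hb5⟩, hae⟩ := h
  intro x A
  induction A generalizing x with
  | var w =>
    intro D hside
    by_cases hxw : x = w
    · subst hxw; simpa [subst] using hb1 x D
    · simpa [subst, hxw] using hb2 x w D hxw
  | app B C ihB ihC =>
    intro D hside
    have hall := side_iff.mp hside
    have hsB : nonBound B ∪ nonFree D = Set.univ := side_iff.mpr fun v => by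
      rcases hall v with hv | hv
      · exact Or.inl hv.1
      · exact Or.inr hv
    have hsC : nonBound C ∪ nonFree D = Set.univ := side_iff.mpr fun v => by
      rcases hall v with hv | hv
      · exact Or.inl hv.2
      · exact Or.inr hv
    refine hEq.trans (hb3 x B C D) ?_
    simpa [subst] using happ _ _ _ _ (ihB x D hsB) (ihC x D hsC)
  | lam w B ih =>
    intro D hside
    have hall := side_iff.mp hside
    by_cases hxw : x = w
    · subst hxw; simpa [subst] using hb4 x B D
    · have hwD : w ∈ nonFree D := by
        rcases hall w with hv | hv
        · exact absurd hv (by simp [nonBound])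
        · exact hv
      have hsB : nonBound B ∪ nonFree D = Set.univ := side_iff.mpr fun v => by
        by_cases hvw : v = w
        · exact Or.inr (hvw ▸ hwD)
        · rcases hall v with hv | hv
          · exact Or.inl hv.1
          · exact Or.inr hv
      have h5 := hb5 x w B D hxw (hI (size D) D le_rfl w x hwD)
      refine hEq.trans h5 ?_
      simpa [subst, hxw] using hlam w _ _ (ih x D hsB)

/-- Full (α) from the lambda-congruence axioms. -/
lemma lemAlpha [Infinite V] (h : IsLambdaCongr R) :
    ∀ (x y : V) (A : Term V), y ∈ nonFree A ∩ nonBound A →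
      R (lam x A) (lam y (subst (var y) x A)) := by
  have hI := lemI h
  have hS := lemS h.1
  obtain ⟨⟨⟨hEq, hlam, happ⟩, _, _, _, _, _⟩, hae⟩ := h
  intro x y A hy
  by_cases hxy : x = y
  · subst hxy; rw [subst_var_self]; exact hEq.refl _
  · have h1 : R (app (lam y A) (var x)) A := hI (size A) A le_rfl y x hy.1
    exact hEq.trans (hae x y A h1) (hlam y _ _ (hS A x y hy.2))

lemma congr_to_theory [Infinite V] (h : IsLambdaCongr R) : IsLambdaTheory R :=
  ⟨h.1.1, lemBeta h, lemAlpha h⟩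

end Dir2
section Dir1
variable {V : Type} [DecidableEq V] {R : Term V → Term V → Prop}

/-- Renaming lemma: any term is `R`-related to one whose bound variables avoid
a given finite set, using congruence and (α). -/
lemma renameT [Infinite V] (hEq : Equivalence R)
    (hlam : ∀ (x : V) (A B : Term V), R A B → R (lam x A) (lam x B))
    (happ : ∀ (A B C D : Term V), R A B → R C D → R (app A C) (app B D))
    (halpha : ∀ (x y : V) (A : Term V), y ∈ nonFree A ∩ nonBound A →
      R (lam x A) (lam y (subst (var y) x A))) :
    ∀ (A : Term V) (s : Set V), s.Finite → ∃ A', R A A' ∧ s ⊆ nonBound A' := by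
  intro A
  induction A with
  | var w =>
    intro s hs
    exact ⟨var w, hEq.refl _, by simp [nonBound]⟩
  | app B C ihB ihC =>
    intro s hs
    obtain ⟨B', hB, hsB⟩ := ihB s hs
    obtain ⟨C', hC, hsC⟩ := ihC s hs
    exact ⟨app B' C', happ _ _ _ _ hB hC, fun v hv => ⟨hsB hv, hsC hv⟩⟩
  | lam w B ih =>
    intro s hs
    obtain ⟨B', hB, hsB⟩ := ih s hs
    obtain ⟨y, hy⟩ := exists_fresh
      (((nonFree_compl_finite B').union (nonBound_compl_finite B')).union hs)
    simp only [Set.mem_union, Set.mem_compl_iff, not_or, not_not] at hy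
    obtain ⟨⟨hyF, hyB⟩, hys⟩ := hy
    refine ⟨lam y (subst (var y) w B'), ?_, ?_⟩
    · exact hEq.trans (hlam w _ _ hB) (halpha w y B' ⟨hyF, hyB⟩)
    · intro v hv
      refine ⟨nonBound_subst (hsB hv) (by simp [nonBound]), ?_⟩
      simp only [Set.mem_singleton_iff]
      exact fun hvy => hys (hvy ▸ hv)

lemma theory_to_congr [Infinite V] (h : IsLambdaTheory R) : IsLambdaCongr R := by
  obtain ⟨⟨hEq, hlam, happ⟩, hbeta, halpha⟩ := h
  have hren := renameT hEq hlam happ halpha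
  -- helper turning renaming into the (β) side condition
  have renFor : ∀ (A D : Term V), ∃ A', R A A' ∧ (nonFree D)ᶜ ⊆ nonBound A' :=
    fun A D => hren A (nonFree D)ᶜ (nonFree_compl_finite D)
  have sideOf : ∀ {A' D : Term V}, (nonFree D)ᶜ ⊆ nonBound A' →
      nonBound A' ∪ nonFree D = Set.univ := by
    intro A' D hsub
    refine side_iff.mpr fun v => ?_
    by_cases hv : v ∈ nonFree D
    · exact Or.inr hv
    · exact Or.inl (hsub hv)
  refine ⟨⟨⟨hEq, hlam, happ⟩, ?_, ?_, ?_, ?_, ?_⟩, ?_⟩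
  · -- β1
    intro x D
    have := hbeta x (var x) D (by simp [nonBound])
    simpa [subst] using this
  · -- β2
    intro x y D hxy
    have := hbeta x (var y) D (by simp [nonBound])
    simpa [subst, hxy] using this
  · -- β3
    intro x A B D
    obtain ⟨A', hA, hA2⟩ := renFor A D
    obtain ⟨B', hB, hB2⟩ := renFor B D
    have sideA := sideOf hA2
    have sideB := sideOf hB2
    have sideAB : nonBound (app A' B') ∪ nonFree D = Set.univ := by
      refine side_iff.mpr fun v => ?_
      by_cases hv : v ∈ nonFree D
      · exact Or.inr hv
      · exact Or.inl ⟨hA2 hv, hB2 hv⟩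
    have step1 : R (app (lam x (app A B)) D) (app (lam x (app A' B')) D) :=
      happ _ _ _ _ (hlam _ _ _ (happ _ _ _ _ hA hB)) (hEq.refl _)
    have step2 : R (app (lam x (app A' B')) D) (app (subst D x A') (subst D x B')) := by
      simpa [subst] using hbeta x (app A' B') D sideAB
    have step3 : R (app (subst D x A') (subst D x B'))
        (app (app (lam x A') D) (app (lam x B') D)) :=
      happ _ _ _ _ (hEq.symm (hbeta x A' D sideA)) (hEq.symm (hbeta x B' D sideB))
    have step4 : R (app (app (lam x A') D) (app (lam x B') D))
        (app (app (lam x A) D) (app (lam x B) D)) :=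
      happ _ _ _ _ (happ _ _ _ _ (hlam _ _ _ (hEq.symm hA)) (hEq.refl _))
        (happ _ _ _ _ (hlam _ _ _ (hEq.symm hB)) (hEq.refl _))
    exact hEq.trans (hEq.trans (hEq.trans step1 step2) step3) step4
  · -- β4
    intro x A D
    obtain ⟨A', hA, hA2⟩ := hren A ((nonFree D)ᶜ ∪ {x})
      ((nonFree_compl_finite D).union (Set.finite_singleton x))
    obtain ⟨y, hy⟩ := exists_fresh
      ((((nonFree_compl_finite A').union (nonBound_compl_finite A')).union
        (nonFree_compl_finite D)).union (Set.finite_singleton x))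
    simp only [Set.mem_union, Set.mem_compl_iff, Set.mem_singleton_iff, not_or,
      not_not] at hy
    obtain ⟨⟨⟨hyF, hyB⟩, hyD⟩, hyx⟩ := hy
    set C := subst (var y) x A' with hC
    have hlxA : R (lam x A) (lam y C) :=
      hEq.trans (hlam _ _ _ hA) (halpha x y A' ⟨hyF, hyB⟩)
    have sideC : nonBound (lam y C) ∪ nonFree D = Set.univ := by
      refine side_iff.mpr fun v => ?_
      by_cases hv : v ∈ nonFree D
      · exact Or.inr hv
      · refine Or.inl ⟨nonBound_subst (hA2 (Or.inl hv)) (by simp [nonBound]), ?_⟩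
        simp only [Set.mem_singleton_iff]
        exact fun hvy => hv (hvy ▸ hyD)
    have hxC : x ∈ nonFree C := by
      refine nonFree_subst_self ?_ A'
      simp only [nonFree, Set.mem_compl_iff, Set.mem_singleton_iff]
      exact fun hh => hyx hh.symm
    have hb : R (app (lam x (lam y C)) D) (lam y C) := by
      have := hbeta x (lam y C) D sideC
      have hxy' : x ≠ y := fun hh => hyx hh.symm
      rwa [show subst D x (lam y C) = lam y C by
        simp [subst, hxy', subst_of_nonFree D hxC]] at this
    have step1 : R (app (lam x (lam x A)) D) (app (lam x (lam y C)) D) :=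
      happ _ _ _ _ (hlam _ _ _ hlxA) (hEq.refl _)
    exact hEq.trans (hEq.trans step1 hb) (hEq.symm hlxA)
  · -- β5
    intro x y A D hxy hD
    obtain ⟨D₀, hD0, hD0s⟩ := hren D {x} (Set.finite_singleton x)
    have hxD0 : x ∈ nonBound D₀ := hD0s rfl
    have hb0 : R (app (lam y D₀) (var x)) (subst (var x) y D₀) := by
      refine hbeta y D₀ (var x) (side_iff.mpr fun v => ?_)
      by_cases hvx : v = x
      · exact Or.inl (hvx ▸ hxD0)
      · exact Or.inr (by simpa [nonFree] using hvx)
    set D₁ := subst (var x) y D₀ with hD₁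
    have hDD1 : R D D₁ :=
      hEq.trans (hEq.symm hD)
        (hEq.trans (happ _ _ _ _ (hlam _ _ _ hD0) (hEq.refl _)) hb0)
    have hyD1 : y ∈ nonFree D₁ := by
      refine nonFree_subst_self ?_ D₀
      simp only [nonFree, Set.mem_compl_iff, Set.mem_singleton_iff]
      exact fun hh => hxy hh.symm
    obtain ⟨A', hA, hA2⟩ := hren A (nonFree D₁)ᶜ (nonFree_compl_finite D₁)
    have sideA' : nonBound A' ∪ nonFree D₁ = Set.univ := by
      refine side_iff.mpr fun v => ?_
      by_cases hv : v ∈ nonFree D₁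
      · exact Or.inr hv
      · exact Or.inl (hA2 hv)
    have sideLam : nonBound (lam y A') ∪ nonFree D₁ = Set.univ := by
      refine side_iff.mpr fun v => ?_
      by_cases hv : v ∈ nonFree D₁
      · exact Or.inr hv
      · refine Or.inl ⟨hA2 hv, ?_⟩
        simp only [Set.mem_singleton_iff]
        exact fun hvy => hv (hvy ▸ hyD1)
    have step1 : R (app (lam x (lam y A)) D) (app (lam x (lam y A')) D₁) :=
      happ _ _ _ _ (hlam _ _ _ (hlam _ _ _ hA)) hDD1
    have step2 : R (app (lam x (lam y A')) D₁) (lam y (subst D₁ x A')) := by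
      have := hbeta x (lam y A') D₁ sideLam
      rwa [show subst D₁ x (lam y A') = lam y (subst D₁ x A') by simp [subst, hxy]] at this
    have step3 : R (lam y (subst D₁ x A')) (lam y (app (lam x A') D₁)) :=
      hlam _ _ _ (hEq.symm (hbeta x A' D₁ sideA'))
    have step4 : R (lam y (app (lam x A') D₁)) (lam y (app (lam x A) D)) :=
      hlam _ _ _ (happ _ _ _ _ (hlam _ _ _ (hEq.symm hA)) (hEq.symm hDD1))
    exact hEq.trans (hEq.trans (hEq.trans step1 step2) step3) step4
  · -- αe
    intro x y A h1
    by_cases hxy : x = y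
    · subst hxy
      exact hlam x _ _ (hEq.symm h1)
    · obtain ⟨A', hA, hA2⟩ := hren A ({x} ∪ {y})
        ((Set.finite_singleton x).union (Set.finite_singleton y))
      have hxA' : x ∈ nonBound A' := hA2 (Or.inl rfl)
      have hyA' : y ∈ nonBound A' := hA2 (Or.inr rfl)
      have hb : R (app (lam y A') (var x)) (subst (var x) y A') := by
        refine hbeta y A' (var x) (side_iff.mpr fun v => ?_)
        by_cases hvx : v = x
        · exact Or.inl (hvx ▸ hxA')
        · exact Or.inr (by simpa [nonFree] using hvx)
      set A₁ := subst (var x) y A' with hA₁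
      have hAA1 : R A A₁ :=
        hEq.trans (hEq.symm h1)
          (hEq.trans (happ _ _ _ _ (hlam _ _ _ hA) (hEq.refl _)) hb)
      have hyF1 : y ∈ nonFree A₁ := by
        refine nonFree_subst_self ?_ A'
        simp only [nonFree, Set.mem_compl_iff, Set.mem_singleton_iff]
        exact fun hh => hxy hh.symm
      have hyB1 : y ∈ nonBound A₁ := nonBound_subst hyA' (by simp [nonBound])
      have hb2 : R (app (lam x A₁) (var y)) (subst (var y) x A₁) := by
        refine hbeta x A₁ (var y) (side_iff.mpr fun v => ?_)
        by_cases hvy : v = y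
        · exact Or.inl (hvy ▸ hyB1)
        · exact Or.inr (by simpa [nonFree] using hvy)
      have step1 : R (lam x A) (lam x A₁) := hlam _ _ _ hAA1
      have step2 : R (lam x A₁) (lam y (subst (var y) x A₁)) := halpha x y A₁ ⟨hyF1, hyB1⟩
      have step3 : R (lam y (subst (var y) x A₁)) (lam y (app (lam x A₁) (var y))) :=
        hlam _ _ _ (hEq.symm hb2)
      have step4 : R (lam y (app (lam x A₁) (var y))) (lam y (app (lam x A) (var y))) :=
        hlam _ _ _ (happ _ _ _ _ (hlam _ _ _ (hEq.symm hAA1)) (hEq.refl _))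
      exact hEq.trans (hEq.trans (hEq.trans step1 step2) step3) step4

end Dir1
end Term


open Term
theorem stmt18 {V : Type} [Infinite V] [DecidableEq V]
    (R : Term V → Term V → Prop) :
    IsLambdaTheory R ↔ IsLambdaCongr R :=
  ⟨Term.theory_to_congr, Term.congr_to_theory⟩
end

section
/- For any two distinct variables x and y, there exists a prelambda congruence ~ such that λx x is not related to λy y by ~. Consequently, prelambda conversion (the least prelambda congruence) does not relate λx x and λy y, and in particular prelambda conversion is not the total relation on terms. -/
open Term
/-- Prelambda conversion: the least prelambda congruence, i.e. the intersection
of all prelambda congruences. -/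
def preConv {V : Type} (A B : Term V) : Prop :=
  ∀ R : Term V → Term V → Prop, IsPrelambda R → R A B


section Model

inductive Fm (V : Type) : Type
  | fvar : V → Fm V
  | node : List (Fm V) → Fm V → Fm V

variable {V : Type} [DecidableEq V]

def interp : Term V → (V → Set (Fm V)) → Set (Fm V)
  | Term.var v, σ => σ v
  | Term.app A B, σ =>
      {ℓ | ∃ F : List (Fm V), (∀ a ∈ F, a ∈ interp B σ) ∧ Fm.node F ℓ ∈ interp A σ}
  | Term.lam v A, σ =>
      {m | m = Fm.fvar v ∨
        ∃ F ℓ, m = Fm.node F ℓ ∧ ℓ ∈ interp A (Function.update σ v {a | a ∈ F})}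

theorem mem_interp_app {A B : Term V} {σ} {ℓ : Fm V} :
    ℓ ∈ interp (Term.app A B) σ ↔
      ∃ F : List (Fm V), (∀ a ∈ F, a ∈ interp B σ) ∧ Fm.node F ℓ ∈ interp A σ :=
  Iff.rfl

theorem node_mem_interp_lam {A : Term V} {σ} {v : V} {F : List (Fm V)} {ℓ : Fm V} :
    Fm.node F ℓ ∈ interp (Term.lam v A) σ ↔
      ℓ ∈ interp A (Function.update σ v {a | a ∈ F}) := by
  simp only [interp, Set.mem_setOf_eq]
  constructor
  · rintro (h | ⟨F', ℓ', h, hl⟩)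
    · exact absurd h (by simp)
    · obtain ⟨rfl, rfl⟩ : F = F' ∧ ℓ = ℓ' := by
        injection h with h1 h2; exact ⟨h1, h2⟩
      exact hl
  · intro h
    exact Or.inr ⟨F, ℓ, rfl, h⟩

theorem fvar_mem_interp_lam {A : Term V} {σ} {v w : V} :
    Fm.fvar w ∈ interp (Term.lam v A) σ ↔ w = v := by
  simp only [interp, Set.mem_setOf_eq]
  constructor
  · rintro (h | ⟨F, ℓ, h, _⟩)
    · injection h
    · injection h
  · rintro rfl; exact Or.inl rfl

theorem interp_mono : ∀ (A : Term V) (σ τ : V → Set (Fm V)), (∀ v, σ v ⊆ τ v) →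
    interp A σ ⊆ interp A τ
  | Term.var v, σ, τ, h => h v
  | Term.app A B, σ, τ, h => by
      intro ℓ hl
      obtain ⟨F, hF, hn⟩ := hl
      exact ⟨F, fun a ha => interp_mono B σ τ h (hF a ha),
        interp_mono A σ τ h hn⟩
  | Term.lam v A, σ, τ, h => by
      rintro m (rfl | ⟨F, ℓ, rfl, hl⟩)
      · exact Or.inl rfl
      · refine Or.inr ⟨F, ℓ, rfl, interp_mono A _ _ ?_ hl⟩
        intro w
        by_cases hw : w = v <;> simp [Function.update, hw, h w]

theorem update_pointwise_mono {σ : V → Set (Fm V)} {x : V} {S T : Set (Fm V)}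
    (h : S ⊆ T) : ∀ v, Function.update σ x S v ⊆ Function.update σ x T v := by
  intro v
  by_cases hv : v = x <;> simp [Function.update, hv, h]

theorem combine (B : Term V) (σ : V → Set (Fm V)) (x : V) (S : Set (Fm V)) :
    ∀ G : List (Fm V),
    (∀ g ∈ G, ∃ F : List (Fm V), (∀ a ∈ F, a ∈ S) ∧
      g ∈ interp B (Function.update σ x {a | a ∈ F})) →
    ∃ F : List (Fm V), (∀ a ∈ F, a ∈ S) ∧
      ∀ g ∈ G, g ∈ interp B (Function.update σ x {a | a ∈ F})
  | [], _ => ⟨[], by simp, by simp⟩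
  | g :: G, h => by
      obtain ⟨F1, hF1, hg⟩ := h g (by simp)
      obtain ⟨F2, hF2, hG⟩ := combine B σ x S G (fun g' hg' => h g' (by simp [hg']))
      refine ⟨F1 ++ F2, ?_, ?_⟩
      · intro a ha
        rcases List.mem_append.1 ha with ha | ha
        · exact hF1 a ha
        · exact hF2 a ha
      · intro g' hg'
        rcases List.mem_cons.1 hg' with rfl | hg'
        · refine interp_mono B _ _ (update_pointwise_mono ?_) hg
          intro a ha; simp only [Set.mem_setOf_eq] at ha ⊢; exact List.mem_append.2 (Or.inl ha)
        · refine interp_mono B _ _ (update_pointwise_mono ?_) (hG g' hg')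
          intro a ha; simp only [Set.mem_setOf_eq] at ha ⊢; exact List.mem_append.2 (Or.inr ha)

/-- The model relation: equality of interpretations in all environments. -/
def MR (A B : Term V) : Prop := ∀ σ : V → Set (Fm V), interp A σ = interp B σ

theorem MR_indep {D : Term V} {x y : V} (hxy : x ≠ y)
    (h : MR (Term.app (Term.lam y D) (Term.var x)) D) :
    ∀ (σ : V → Set (Fm V)) (S : Set (Fm V)),
      interp D (Function.update σ y S) = interp D σ := by
  have key : ∀ τ : V → Set (Fm V), interp D τ =
      {ℓ | ∃ F : List (Fm V), (∀ a ∈ F, a ∈ τ x) ∧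
        ℓ ∈ interp D (Function.update τ y {a | a ∈ F})} := by
    intro τ
    rw [← h τ]
    ext ℓ
    rw [mem_interp_app]
    simp only [Set.mem_setOf_eq]
    constructor
    · rintro ⟨F, hF, hn⟩
      exact ⟨F, hF, node_mem_interp_lam.1 hn⟩
    · rintro ⟨F, hF, hl⟩
      exact ⟨F, hF, node_mem_interp_lam.2 hl⟩
  intro σ S
  rw [key (Function.update σ y S), key σ]
  ext ℓ
  simp only [Set.mem_setOf_eq, Function.update_of_ne hxy, Function.update_idem]

theorem MR_isPrelambda : IsPrelambda (MR (V := V)) := by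
  constructor
  · refine ⟨⟨fun A σ => rfl, fun h σ => (h σ).symm,
      fun h1 h2 σ => (h1 σ).trans (h2 σ)⟩, ?_, ?_⟩
    · intro v A B h σ
      have h' : ∀ σ, interp A σ = interp B σ := h
      simp only [interp, h']
    · intro A B C D h1 h2 σ
      have h1' : ∀ σ, interp A σ = interp B σ := h1
      have h2' : ∀ σ, interp C σ = interp D σ := h2
      simp only [interp, h1', h2']
  refine ⟨?_, ?_, ?_, ?_, ?_⟩
  · -- β1
    intro v D σ
    ext ℓ
    rw [mem_interp_app]
    constructor
    · rintro ⟨F, hF, hn⟩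
      rw [node_mem_interp_lam] at hn
      simp only [interp, Function.update_self, Set.mem_setOf_eq] at hn
      exact hF ℓ hn
    · intro hl
      refine ⟨[ℓ], by simpa using hl, ?_⟩
      rw [node_mem_interp_lam]
      simp [interp]
  · -- β2
    intro v w D hvw σ
    ext ℓ
    rw [mem_interp_app]
    constructor
    · rintro ⟨F, hF, hn⟩
      rw [node_mem_interp_lam] at hn
      simpa only [interp, Function.update_of_ne (Ne.symm hvw)] using hn
    · intro hl
      refine ⟨[], by simp, ?_⟩
      rw [node_mem_interp_lam]
      simpa only [interp, Function.update_of_ne (Ne.symm hvw)] using hl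
  · -- β3
    intro v A B D σ
    ext ℓ
    rw [mem_interp_app, mem_interp_app]
    constructor
    · rintro ⟨F, hF, hn⟩
      rw [node_mem_interp_lam] at hn
      rw [mem_interp_app] at hn
      obtain ⟨G, hG, hnode⟩ := hn
      refine ⟨G, ?_, ?_⟩
      · intro g hg
        rw [mem_interp_app]
        refine ⟨F, hF, ?_⟩
        rw [node_mem_interp_lam]
        exact hG g hg
      · rw [mem_interp_app]
        refine ⟨F, hF, ?_⟩
        rw [node_mem_interp_lam]
        exact hnode
    · rintro ⟨G, hG, hnode⟩
      rw [mem_interp_app] at hnode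
      obtain ⟨F1, hF1, hn1⟩ := hnode
      rw [node_mem_interp_lam] at hn1
      have hG' : ∀ g ∈ G, ∃ F : List (Fm V), (∀ a ∈ F, a ∈ interp D σ) ∧
          g ∈ interp B (Function.update σ v {a | a ∈ F}) := by
        intro g hg
        obtain ⟨F, hF, hn⟩ := mem_interp_app.1 (hG g hg)
        rw [node_mem_interp_lam] at hn
        exact ⟨F, hF, hn⟩
      obtain ⟨F2, hF2, hG2⟩ := combine B σ v (interp D σ) G hG'
      refine ⟨F1 ++ F2, ?_, ?_⟩
      · intro a ha
        rcases List.mem_append.1 ha with ha | ha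
        · exact hF1 a ha
        · exact hF2 a ha
      · rw [node_mem_interp_lam, mem_interp_app]
        refine ⟨G, ?_, ?_⟩
        · intro g hg
          refine interp_mono B _ _ (update_pointwise_mono ?_) (hG2 g hg)
          intro a ha; simp only [Set.mem_setOf_eq] at ha ⊢
          exact List.mem_append.2 (Or.inr ha)
        · refine interp_mono A _ _ (update_pointwise_mono ?_) hn1
          intro a ha; simp only [Set.mem_setOf_eq] at ha ⊢
          exact List.mem_append.2 (Or.inl ha)
  · -- β4
    intro v A D σ
    ext m
    rw [mem_interp_app]
    constructor
    · rintro ⟨F, _, hn⟩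
      rw [node_mem_interp_lam] at hn
      rcases hn with rfl | ⟨G, n, rfl, hn⟩
      · exact Or.inl rfl
      · rw [Function.update_idem] at hn
        exact Or.inr ⟨G, n, rfl, hn⟩
    · intro hm
      refine ⟨[], by simp, ?_⟩
      rw [node_mem_interp_lam]
      rcases hm with rfl | ⟨G, n, rfl, hn⟩
      · exact fvar_mem_interp_lam.2 rfl
      · rw [node_mem_interp_lam, Function.update_idem]
        exact hn
  · -- β5
    intro v w A D hvw hR σ
    have hindep := MR_indep hvw hR
    ext m
    rw [mem_interp_app]
    constructor
    · rintro ⟨F, hF, hn⟩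
      rw [node_mem_interp_lam] at hn
      rcases hn with rfl | ⟨G, n, rfl, hn⟩
      · exact Or.inl rfl
      · refine Or.inr ⟨G, n, rfl, ?_⟩
        rw [mem_interp_app]
        refine ⟨F, ?_, ?_⟩
        · intro a ha
          rw [hindep σ {a | a ∈ G}]
          exact hF a ha
        · rw [node_mem_interp_lam]
          rwa [Function.update_comm hvw] at hn
    · rintro (rfl | ⟨G, n, rfl, hn⟩)
      · refine ⟨[], by simp, ?_⟩
        rw [node_mem_interp_lam]
        exact Or.inl rfl
      · rw [mem_interp_app] at hn
        obtain ⟨F, hF, hn⟩ := hn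
        rw [node_mem_interp_lam] at hn
        refine ⟨F, ?_, ?_⟩
        · intro a ha
          have := hF a ha
          rwa [hindep σ {a | a ∈ G}] at this
        · rw [node_mem_interp_lam]
          refine Or.inr ⟨G, n, rfl, ?_⟩
          rwa [Function.update_comm (Ne.symm hvw)] at hn

theorem MR_ne {v w : V} (hvw : v ≠ w) :
    ¬ MR (Term.lam v (Term.var v)) (Term.lam w (Term.var w)) := by
  intro h
  have := h (fun _ => ∅)
  have hv : Fm.fvar v ∈ interp (Term.lam v (Term.var v)) (fun _ => (∅ : Set (Fm V))) :=
    fvar_mem_interp_lam.2 rfl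
  rw [this] at hv
  exact hvw (fvar_mem_interp_lam.1 hv)

end Model

theorem stmt19 {V : Type} [Infinite V] [DecidableEq V]
    (x y : V) (hxy : x ≠ y) :
    (∃ R : Term V → Term V → Prop, IsPrelambda R ∧
      ¬ R (Term.lam x (Term.var x)) (Term.lam y (Term.var y))) ∧
    ¬ preConv (Term.lam x (Term.var x)) (Term.lam y (Term.var y)) ∧
    preConv (V := V) ≠ (fun _ _ => True) := by
  refine ⟨⟨MR, MR_isPrelambda, MR_ne hxy⟩, ?_, ?_⟩
  · intro h
    exact MR_ne hxy (h MR MR_isPrelambda)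
  · intro h
    have : preConv (Term.lam x (Term.var x)) (Term.lam y (Term.var y)) := by
      rw [h]; trivial
    exact MR_ne hxy (this MR MR_isPrelambda)
end
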